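/- For the uniform distribution P on {(0,1,0),(0,1,1),(1,0,0),(1,1,0),(2,0,1)}, there exists a no-signaling conditional distribution Q(x_A, x_B | a, b) on {0,1,2}² (given inputs in {0,1}²) such that ∑_{(x,a,b)} P(x,a,b)·Q(x,x|a,b) = 1/2. -/
import Mathlib


/-- The uniform distribution on {(0,1,0),(0,1,1),(1,0,0),(1,1,0),(2,0,1)}. -/
noncomputable def Psep (x : Fin 3) (a b : Fin 2) : ℝ :=
  if (x, a, b) ∈ ({(0,1,0), (0,1,1), (1,0,0), (1,1,0), (2,0,1)} :
      Set (Fin 3 × Fin 2 × Fin 2)) then 1/5 else 0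

/-- An explicit no-signaling box. -/
noncomputable def Qbox : Fin 3 → Fin 3 → Fin 2 → Fin 2 → ℝ :=
  ![![![![0,0],![1/2,1/2]], ![![0,0],![0,0]],     ![![0,0],![0,0]]],
    ![![![0,1/2],![0,0]],   ![![1/2,0],![1/2,0]], ![![0,0],![0,1/2]]],
    ![![![1/2,0],![0,0]],   ![![0,0],![0,0]],     ![![0,1/2],![0,0]]]]

/-- There is a no-signaling strategy winning the game for `Psep` with
probability 1/2. -/
theorem nosignaling_value_Psep :
    ∃ Q : Fin 3 → Fin 3 → Fin 2 → Fin 2 → ℝ,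
      (∀ xA xB a b, 0 ≤ Q xA xB a b) ∧
      (∀ a b, ∑ xA, ∑ xB, Q xA xB a b = 1) ∧
      (∀ xB a a' b, ∑ xA, Q xA xB a b = ∑ xA, Q xA xB a' b) ∧
      (∀ xA a b b', ∑ xB, Q xA xB a b = ∑ xB, Q xA xB a b') ∧
      (∑ x, ∑ a, ∑ b, Psep x a b * Q x x a b) = 1/2 := by
  refine ⟨Qbox, ?_, ?_, ?_, ?_, ?_⟩
  · intro xA xB a b
    fin_cases xA <;> fin_cases xB <;> fin_cases a <;> fin_cases b <;>
      norm_num [Qbox]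
  · intro a b
    fin_cases a <;> fin_cases b <;>
      norm_num [Qbox, Fin.sum_univ_succ]
  · intro xB a a' b
    fin_cases xB <;> fin_cases a <;> fin_cases a' <;> fin_cases b <;>
      norm_num [Qbox, Fin.sum_univ_succ]
  · intro xA a b b'
    fin_cases xA <;> fin_cases a <;> fin_cases b <;> fin_cases b' <;>
      norm_num [Qbox, Fin.sum_univ_succ]
  · norm_num [Qbox, Psep, Fin.sum_univ_succ]
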